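/- Let L > 0, J_T ∈ ℝ, and let σ, ω, Ω be twice continuously differentiable real functions on {(ρ,z) : ρ > 0} such that σ(ρ, z+L) = σ(ρ,z), Ω(ρ, z+L) = Ω(ρ,z), and ω(ρ, z+L) = ω(ρ,z) + 8J_T. Assume σ and ω satisfy the reduced vacuum Einstein equations Δσ = −e^{−2σ}(ω_ρ² + ω_z²)/ρ⁴ and Δω = 4ω_ρ/ρ + 2(ω_ρσ_ρ + ω_zσ_z), and that Ω satisfies the quadratures Ω_z = ρω_ρ/η² and Ω_ρ = −ρω_z/η², with η = ρ²e^σ. Define M(ρ) = (1/4)∫_{−L/2}^{L/2} (−ρ σ_ρ(ρ,z) + Ω(ρ,z) ω_z(ρ,z)) dz. Then M is constant on (0,∞): d M(ρ)/dρ = 0 for every ρ > 0. -/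

import Mathlib

/-- Partial derivative with respect to the first (ρ) variable. -/
noncomputable def pdr (f : ℝ × ℝ → ℝ) (p : ℝ × ℝ) : ℝ :=
  deriv (fun x => f (x, p.2)) p.1

/-- Partial derivative with respect to the second (z) variable. -/
noncomputable def pdz (f : ℝ × ℝ → ℝ) (p : ℝ × ℝ) : ℝ :=
  deriv (fun y => f (p.1, y)) p.2

/-- The flat cylindrically symmetric Laplacian Δ = ∂²_ρ + (1/ρ)∂_ρ + ∂²_z. -/
noncomputable def lap (f : ℝ × ℝ → ℝ) (p : ℝ × ℝ) : ℝ :=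
  pdr (pdr f) p + pdr f p / p.1 + pdz (pdz f) p

/-! Differentiating under the integral sign, the `ρ`-derivative of the Komar integrand
`-ρ σ_ρ + Ω ω_z` is the `z`-derivative of `ρ σ_z + Ω ω_ρ`: the equation for `σ` trades
`-σ_ρ - ρ σ_ρρ` for `ρ σ_zz` plus `(ω_ρ² + ω_z²) / (ρ³ e^{2σ})`, the quadratures turn
this extra term into `Ω_z ω_ρ - Ω_ρ ω_z`, and `ω_ρz = ω_zρ`. Since `σ`, `Ω` and `ω_ρ` are
`L`-periodic in `z` (`ω` itself only up to the constant `8 J_T`), the integral of that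
`z`-derivative over a period vanishes. -/

open Set Filter Topology MeasureTheory intervalIntegral
open scoped Interval

section PartialDerivatives

variable {f : ℝ × ℝ → ℝ} {p : ℝ × ℝ} {U : Set (ℝ × ℝ)}

theorem DifferentiableAt.hasDerivAt_pdr_fderiv (hf : DifferentiableAt ℝ f p) :
    HasDerivAt (fun x => f (x, p.2)) (fderiv ℝ f p (1, 0)) p.1 :=
  hf.hasFDerivAt.comp_hasDerivAt_of_eq p.1 ((hasDerivAt_id p.1).prodMk (hasDerivAt_const _ _)) rfl

theorem DifferentiableAt.hasDerivAt_pdz_fderiv (hf : DifferentiableAt ℝ f p) :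
    HasDerivAt (fun y => f (p.1, y)) (fderiv ℝ f p (0, 1)) p.2 :=
  hf.hasFDerivAt.comp_hasDerivAt_of_eq p.2 ((hasDerivAt_const _ _).prodMk (hasDerivAt_id p.2)) rfl

theorem pdr_eq_fderiv (hf : DifferentiableAt ℝ f p) : pdr f p = fderiv ℝ f p (1, 0) :=
  hf.hasDerivAt_pdr_fderiv.deriv

theorem pdz_eq_fderiv (hf : DifferentiableAt ℝ f p) : pdz f p = fderiv ℝ f p (0, 1) :=
  hf.hasDerivAt_pdz_fderiv.deriv

theorem DifferentiableAt.hasDerivAt_pdr (hf : DifferentiableAt ℝ f p) :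
    HasDerivAt (fun x => f (x, p.2)) (pdr f p) p.1 :=
  pdr_eq_fderiv hf ▸ hf.hasDerivAt_pdr_fderiv

theorem DifferentiableAt.hasDerivAt_pdz (hf : DifferentiableAt ℝ f p) :
    HasDerivAt (fun y => f (p.1, y)) (pdz f p) p.2 :=
  pdz_eq_fderiv hf ▸ hf.hasDerivAt_pdz_fderiv

theorem ContDiffOn.differentiableAt_of_isOpen {n : WithTop ℕ∞} (hf : ContDiffOn ℝ n f U)
    (hU : IsOpen U) (hn : n ≠ 0) (hp : p ∈ U) : DifferentiableAt ℝ f p :=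
  (hf.contDiffAt (hU.mem_nhds hp)).differentiableAt hn

theorem ContDiffOn.pdr {m n : WithTop ℕ∞} (hf : ContDiffOn ℝ n f U) (hU : IsOpen U)
    (hmn : m + 1 ≤ n) : ContDiffOn ℝ m (pdr f) U := by
  refine ((ContinuousLinearMap.apply ℝ ℝ ((1 : ℝ), (0 : ℝ))).contDiff.comp_contDiffOn
    (hf.fderiv_of_isOpen hU hmn)).congr fun q hq => pdr_eq_fderiv ?_
  exact hf.differentiableAt_of_isOpen hU (zero_lt_one.trans_le (le_add_self.trans hmn)).ne' hq

theorem ContDiffOn.pdz {m n : WithTop ℕ∞} (hf : ContDiffOn ℝ n f U) (hU : IsOpen U)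
    (hmn : m + 1 ≤ n) : ContDiffOn ℝ m (pdz f) U := by
  refine ((ContinuousLinearMap.apply ℝ ℝ ((0 : ℝ), (1 : ℝ))).contDiff.comp_contDiffOn
    (hf.fderiv_of_isOpen hU hmn)).congr fun q hq => pdz_eq_fderiv ?_
  exact hf.differentiableAt_of_isOpen hU (zero_lt_one.trans_le (le_add_self.trans hmn)).ne' hq

theorem fderiv_fderiv_apply {v : ℝ × ℝ} (hf : DifferentiableAt ℝ (fderiv ℝ f) p) (w : ℝ × ℝ) :
    fderiv ℝ (fun q => fderiv ℝ f q v) p w = fderiv ℝ (fderiv ℝ f) p w v := by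
  rw [fderiv_clm_apply hf (differentiableAt_const v)]
  simp

theorem pdz_pdr_eq_pdr_pdz (hf : ContDiffOn ℝ 2 f U) (hU : IsOpen U) (hp : p ∈ U) :
    pdz (pdr f) p = pdr (pdz f) p := by
  have hfp : ContDiffAt ℝ 2 f p := hf.contDiffAt (hU.mem_nhds hp)
  have hf' : DifferentiableAt ℝ (fderiv ℝ f) p :=
    (hfp.fderiv_right (m := 1) (by norm_num)).differentiableAt one_ne_zero
  have hdiff : ∀ᶠ q in 𝓝 p, DifferentiableAt ℝ f q := eventually_of_mem (hU.mem_nhds hp)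
    fun q hq => hf.differentiableAt_of_isOpen hU two_ne_zero hq
  have hr : pdr f =ᶠ[𝓝 p] fun q => fderiv ℝ f q (1, 0) := hdiff.mono fun _ => pdr_eq_fderiv
  have hz : pdz f =ᶠ[𝓝 p] fun q => fderiv ℝ f q (0, 1) := hdiff.mono fun _ => pdz_eq_fderiv
  have hfr := (hf.pdr hU (m := 1) (by norm_num)).differentiableAt_of_isOpen hU one_ne_zero hp
  have hfz := (hf.pdz hU (m := 1) (by norm_num)).differentiableAt_of_isOpen hU one_ne_zero hp
  rw [pdz_eq_fderiv hfr, pdr_eq_fderiv hfz, hr.fderiv_eq, hz.fderiv_eq, fderiv_fderiv_apply hf',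
    fderiv_fderiv_apply hf']
  exact hfp.isSymmSndFDerivAt (by simp [minSmoothness_of_isRCLikeNormedField]) _ _

theorem pdz_add_of_forall_add_eq {L ρ : ℝ} (h : ∀ z, f (ρ, z + L) = f (ρ, z)) (z : ℝ) :
    pdz f (ρ, z + L) = pdz f (ρ, z) := by
  change deriv _ (z + L) = deriv _ z
  rw [← deriv_comp_add_const]
  simp only [h]

theorem pdr_add_of_eventually_add_eq {L c : ℝ}
    (h : (fun x => f (x, p.2 + L)) =ᶠ[𝓝 p.1] fun x => f (x, p.2) + c) :
    pdr f (p.1, p.2 + L) = pdr f p := by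
  change deriv _ p.1 = deriv _ p.1
  rw [h.deriv_eq, deriv_add_const]

end PartialDerivatives

theorem hasDerivAt_intervalIntegral_of_continuousOn {U : Set (ℝ × ℝ)} {F F' : ℝ × ℝ → ℝ}
    (hU : IsOpen U) (hF : ContinuousOn F U) (hF' : ContinuousOn F' U)
    (hFF' : ∀ p ∈ U, HasDerivAt (fun x => F (x, p.2)) (F' p) p.1)
    {a b r : ℝ} (hr : ∀ z ∈ [[a, b]], (r, z) ∈ U) :
    HasDerivAt (fun x => ∫ z in a..b, F (x, z)) (∫ z in a..b, F' (r, z)) r := by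
  obtain ⟨δ, hδ, hsub⟩ : ∃ δ > 0, Metric.closedBall r δ ×ˢ [[a, b]] ⊆ U := by
    obtain ⟨u, v, hu, -, hru, hv, huv⟩ :=
      generalized_tube_lemma isCompact_singleton isCompact_uIcc hU
        (by rintro ⟨x, z⟩ ⟨rfl, hz⟩; exact hr z hz)
    obtain ⟨δ, hδ, hball⟩ := Metric.nhds_basis_closedBall.mem_iff.mp
      (hu.mem_nhds (hru rfl))
    exact ⟨δ, hδ, (prod_mono hball hv).trans huv⟩
  have hslice : ∀ {G : ℝ × ℝ → ℝ}, ContinuousOn G U → ∀ x ∈ Metric.closedBall r δ,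
      ContinuousOn (fun z => G (x, z)) [[a, b]] := fun hG x hx =>
    hG.comp (by fun_prop) fun z hz => hsub ⟨hx, hz⟩
  have hmeas : ∀ {G : ℝ × ℝ → ℝ}, ContinuousOn G U → ∀ x ∈ Metric.closedBall r δ,
      AEStronglyMeasurable (fun z => G (x, z)) (volume.restrict (Ι a b)) := fun hG x hx =>
    ((hslice hG x hx).mono uIoc_subset_uIcc).aestronglyMeasurable measurableSet_uIoc
  have hr₀ : r ∈ Metric.closedBall r δ := Metric.mem_closedBall_self hδ.le
  obtain ⟨C, hC⟩ :=
    ((isCompact_closedBall r δ).prod isCompact_uIcc).exists_bound_of_continuousOn (hF'.mono hsub)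
  refine (hasDerivAt_integral_of_dominated_loc_of_deriv_le (F := fun x z => F (x, z))
    (F' := fun x z => F' (x, z)) (bound := fun _ => C)
    (Metric.ball_mem_nhds r hδ) ?_ ((hslice hF r hr₀).intervalIntegrable) (hmeas hF' r hr₀)
    ?_ intervalIntegrable_const ?_).2
  · filter_upwards [Metric.ball_mem_nhds r hδ] with x hx
    exact hmeas hF x (Metric.ball_subset_closedBall hx)
  · exact .of_forall fun z hz x hx =>
      hC (x, z) ⟨Metric.ball_subset_closedBall hx, uIoc_subset_uIcc hz⟩
  · exact .of_forall fun z hz x hx =>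
      hFF' (x, z) (hsub ⟨Metric.ball_subset_closedBall hx, uIoc_subset_uIcc hz⟩)

section Komar

variable {U : Set (ℝ × ℝ)} {σ ω Ω : ℝ × ℝ → ℝ} {p : ℝ × ℝ}

noncomputable def komarIntegrand (σ ω Ω : ℝ × ℝ → ℝ) (p : ℝ × ℝ) : ℝ :=
  -p.1 * pdr σ p + Ω p * pdz ω p

noncomputable def komarPotential (σ ω Ω : ℝ × ℝ → ℝ) (p : ℝ × ℝ) : ℝ :=
  p.1 * pdz σ p + Ω p * pdr ω p

noncomputable def komarDensity (σ ω Ω : ℝ × ℝ → ℝ) (p : ℝ × ℝ) : ℝ :=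
  p.1 * pdz (pdz σ) p + (pdz Ω p * pdr ω p + Ω p * pdz (pdr ω) p)

theorem exp_neg_two_mul_mul_exp_sq (x : ℝ) : Real.exp (-2 * x) * Real.exp x ^ 2 = 1 := by
  rw [← Real.exp_nat_mul, ← Real.exp_add]
  norm_num

theorem pdr_komar_eq_of_reduced_einstein (hp : 0 < p.1)
    (heqσ : lap σ p = -Real.exp (-2 * σ p) * (pdr ω p ^ 2 + pdz ω p ^ 2) / p.1 ^ 4)
    (hΩz : pdz Ω p = p.1 * pdr ω p / (p.1 ^ 2 * Real.exp (σ p)) ^ 2)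
    (hΩr : pdr Ω p = -p.1 * pdz ω p / (p.1 ^ 2 * Real.exp (σ p)) ^ 2) :
    -pdr σ p - p.1 * pdr (pdr σ) p + pdr Ω p * pdz ω p =
      p.1 * pdz (pdz σ) p + pdz Ω p * pdr ω p := by
  rw [lap, eq_inv_of_mul_eq_one_left (exp_neg_two_mul_mul_exp_sq (σ p))] at heqσ
  rw [hΩz, hΩr]
  field_simp at heqσ ⊢
  linear_combination -heqσ

theorem continuousOn_komarIntegrand (hσ : ContDiffOn ℝ 2 σ U) (hω : ContDiffOn ℝ 2 ω U)
    (hΩ : ContDiffOn ℝ 1 Ω U) (hU : IsOpen U) : ContinuousOn (komarIntegrand σ ω Ω) U := by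
  have hσr := (hσ.pdr hU (m := 0) (by norm_num)).continuousOn
  have hωz := (hω.pdz hU (m := 0) (by norm_num)).continuousOn
  have hΩc := hΩ.continuousOn
  unfold komarIntegrand
  fun_prop

theorem continuousOn_komarDensity (hσ : ContDiffOn ℝ 2 σ U) (hω : ContDiffOn ℝ 2 ω U)
    (hΩ : ContDiffOn ℝ 1 Ω U) (hU : IsOpen U) : ContinuousOn (komarDensity σ ω Ω) U := by
  have hσzz := ((hσ.pdz hU (m := 1) (by norm_num)).pdz hU (m := 0) (by norm_num)).continuousOn
  have hΩz := (hΩ.pdz hU (m := 0) (by norm_num)).continuousOn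
  have hωr := (hω.pdr hU (m := 0) (by norm_num)).continuousOn
  have hΩc := hΩ.continuousOn
  have hωrz := ((hω.pdr hU (m := 1) (by norm_num)).pdz hU (m := 0) (by norm_num)).continuousOn
  unfold komarDensity
  fun_prop

theorem hasDerivAt_komarPotential_snd (hσ : ContDiffOn ℝ 2 σ U) (hω : ContDiffOn ℝ 2 ω U)
    (hΩ : ContDiffOn ℝ 1 Ω U) (hU : IsOpen U) (hp : p ∈ U) :
    HasDerivAt (fun z => komarPotential σ ω Ω (p.1, z)) (komarDensity σ ω Ω p) p.2 := by
  have hσz := (hσ.pdz hU (m := 1) (by norm_num)).differentiableAt_of_isOpen hU one_ne_zero hp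
  have hωr := (hω.pdr hU (m := 1) (by norm_num)).differentiableAt_of_isOpen hU one_ne_zero hp
  have hΩp := hΩ.differentiableAt_of_isOpen hU one_ne_zero hp
  exact (hσz.hasDerivAt_pdz.const_mul p.1).add (hΩp.hasDerivAt_pdz.mul hωr.hasDerivAt_pdz)

theorem hasDerivAt_komarIntegrand_fst (hσ : ContDiffOn ℝ 2 σ U) (hω : ContDiffOn ℝ 2 ω U)
    (hΩ : ContDiffOn ℝ 1 Ω U) (hU : IsOpen U) (hp : p ∈ U) (hp₀ : 0 < p.1)
    (heqσ : lap σ p = -Real.exp (-2 * σ p) * (pdr ω p ^ 2 + pdz ω p ^ 2) / p.1 ^ 4)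
    (hΩz : pdz Ω p = p.1 * pdr ω p / (p.1 ^ 2 * Real.exp (σ p)) ^ 2)
    (hΩr : pdr Ω p = -p.1 * pdz ω p / (p.1 ^ 2 * Real.exp (σ p)) ^ 2) :
    HasDerivAt (fun x => komarIntegrand σ ω Ω (x, p.2)) (komarDensity σ ω Ω p) p.1 := by
  have hσr := (hσ.pdr hU (m := 1) (by norm_num)).differentiableAt_of_isOpen hU one_ne_zero hp
  have hωz := (hω.pdz hU (m := 1) (by norm_num)).differentiableAt_of_isOpen hU one_ne_zero hp
  have hΩp := hΩ.differentiableAt_of_isOpen hU one_ne_zero hp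
  refine (((hasDerivAt_neg p.1).mul hσr.hasDerivAt_pdr).add
    (hΩp.hasDerivAt_pdr.mul hωz.hasDerivAt_pdr)).congr_deriv ?_
  rw [komarDensity, pdz_pdr_eq_pdr_pdz hω hU hp]
  linear_combination pdr_komar_eq_of_reduced_einstein hp₀ heqσ hΩz hΩr

theorem komarPotential_add_period {L J_T r : ℝ} (hr : 0 < r)
    (hσper : ∀ p : ℝ × ℝ, 0 < p.1 → σ (p.1, p.2 + L) = σ p)
    (hΩper : ∀ p : ℝ × ℝ, 0 < p.1 → Ω (p.1, p.2 + L) = Ω p)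
    (hωper : ∀ p : ℝ × ℝ, 0 < p.1 → ω (p.1, p.2 + L) = ω p + 8 * J_T) (z : ℝ) :
    komarPotential σ ω Ω (r, z + L) = komarPotential σ ω Ω (r, z) := by
  have hωr : pdr ω (r, z + L) = pdr ω (r, z) :=
    pdr_add_of_eventually_add_eq (p := (r, z)) <|
      eventually_gt_nhds hr |>.mono fun x hx => hωper (x, z) hx
  rw [komarPotential, komarPotential, pdz_add_of_forall_add_eq (fun t => hσper (r, t) hr),
    hΩper (r, z) hr, hωr]

end Komar

theorem mass_formula_general
    (L J_T : ℝ)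
    (σ ω Ω : ℝ × ℝ → ℝ)
    (hσ : ContDiffOn ℝ 2 σ {p : ℝ × ℝ | 0 < p.1})
    (hω : ContDiffOn ℝ 2 ω {p : ℝ × ℝ | 0 < p.1})
    (hΩ : ContDiffOn ℝ 2 Ω {p : ℝ × ℝ | 0 < p.1})
    (hσper : ∀ p : ℝ × ℝ, 0 < p.1 → σ (p.1, p.2 + L) = σ p)
    (hΩper : ∀ p : ℝ × ℝ, 0 < p.1 → Ω (p.1, p.2 + L) = Ω p)
    (hωper : ∀ p : ℝ × ℝ, 0 < p.1 → ω (p.1, p.2 + L) = ω p + 8 * J_T)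
    (heqσ : ∀ p : ℝ × ℝ, 0 < p.1 → lap σ p =
      - Real.exp (-2 * σ p) * ((pdr ω p) ^ 2 + (pdz ω p) ^ 2) / p.1 ^ 4)
    (η : ℝ × ℝ → ℝ)
    (hη : ∀ p, η p = p.1 ^ 2 * Real.exp (σ p))
    (hΩz : ∀ p : ℝ × ℝ, 0 < p.1 → pdz Ω p = p.1 * pdr ω p / (η p) ^ 2)
    (hΩr : ∀ p : ℝ × ℝ, 0 < p.1 → pdr Ω p = - p.1 * pdz ω p / (η p) ^ 2) :
    ∀ r : ℝ, 0 < r →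
      deriv (fun s : ℝ =>
        (1 / 4) * ∫ z in (-L / 2)..(L / 2),
          (- s * pdr σ (s, z) + Ω (s, z) * pdz ω (s, z))) r = 0 := by
  intro r hr
  have hU : IsOpen {p : ℝ × ℝ | 0 < p.1} := isOpen_lt continuous_const continuous_fst
  have hΩ₁ := hΩ.of_le one_le_two
  have hM : HasDerivAt (fun s => ∫ z in (-L / 2)..(L / 2), komarIntegrand σ ω Ω (s, z))
      (∫ z in (-L / 2)..(L / 2), komarDensity σ ω Ω (r, z)) r :=
    hasDerivAt_intervalIntegral_of_continuousOn hU (continuousOn_komarIntegrand hσ hω hΩ₁ hU)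
      (continuousOn_komarDensity hσ hω hΩ₁ hU)
      (fun p hp => hasDerivAt_komarIntegrand_fst hσ hω hΩ₁ hU hp hp (heqσ p hp)
        (by rw [hΩz p hp, hη]) (by rw [hΩr p hp, hη]))
      fun _ _ => hr
  have hslice : Continuous fun z => komarDensity σ ω Ω (r, z) :=
    (continuousOn_komarDensity hσ hω hΩ₁ hU).comp_continuous (by fun_prop) fun _ => hr
  have hFTC : ∫ z in (-L / 2)..(L / 2), komarDensity σ ω Ω (r, z) =
      komarPotential σ ω Ω (r, L / 2) - komarPotential σ ω Ω (r, -L / 2) :=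
    integral_eq_sub_of_hasDerivAt (f := fun z => komarPotential σ ω Ω (r, z))
      (fun z _ => hasDerivAt_komarPotential_snd hσ hω hΩ₁ hU (p := (r, z)) hr)
      (hslice.intervalIntegrable _ _)
  change deriv (fun s => 1 / 4 * ∫ z in (-L / 2)..(L / 2), komarIntegrand σ ω Ω (s, z)) r = 0
  rw [(hM.const_mul (1 / 4)).deriv, hFTC, show L / 2 = -L / 2 + L by ring,
    komarPotential_add_period hr hσper hΩper hωper, sub_self, mul_zero]

/-- the Mass formula. For a periodic solution of the reduced vacuum
Einstein equations with angular-velocity potential Ω satisfying the quadratures,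
the Komar mass M(ρ) = (1/4)∫_{−L/2}^{L/2}(−ρσ_ρ + Ω ω_z) dz is independent of ρ. -/
theorem mass_formula
    (L J_T : ℝ) (hL : 0 < L)
    (σ ω Ω : ℝ × ℝ → ℝ)
    (hσ : ContDiffOn ℝ 2 σ {p : ℝ × ℝ | 0 < p.1})
    (hω : ContDiffOn ℝ 2 ω {p : ℝ × ℝ | 0 < p.1})
    (hΩ : ContDiffOn ℝ 2 Ω {p : ℝ × ℝ | 0 < p.1})
    (hσper : ∀ p : ℝ × ℝ, 0 < p.1 → σ (p.1, p.2 + L) = σ p)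
    (hΩper : ∀ p : ℝ × ℝ, 0 < p.1 → Ω (p.1, p.2 + L) = Ω p)
    (hωper : ∀ p : ℝ × ℝ, 0 < p.1 → ω (p.1, p.2 + L) = ω p + 8 * J_T)
    (heqσ : ∀ p : ℝ × ℝ, 0 < p.1 → lap σ p =
      - Real.exp (-2 * σ p) * ((pdr ω p) ^ 2 + (pdz ω p) ^ 2) / p.1 ^ 4)
    (heqω : ∀ p : ℝ × ℝ, 0 < p.1 → lap ω p =
      4 * pdr ω p / p.1 + 2 * (pdr ω p * pdr σ p + pdz ω p * pdz σ p))
    (η : ℝ × ℝ → ℝ)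
    (hη : ∀ p, η p = p.1 ^ 2 * Real.exp (σ p))
    (hΩz : ∀ p : ℝ × ℝ, 0 < p.1 → pdz Ω p = p.1 * pdr ω p / (η p) ^ 2)
    (hΩr : ∀ p : ℝ × ℝ, 0 < p.1 → pdr Ω p = - p.1 * pdz ω p / (η p) ^ 2) :
    ∀ r : ℝ, 0 < r →
      deriv (fun s : ℝ =>
        (1 / 4) * ∫ z in (-L / 2)..(L / 2),
          (- s * pdr σ (s, z) + Ω (s, z) * pdz ω (s, z))) r = 0 :=
  mass_formula_general L J_T σ ω Ω hσ hω hΩ hσper hΩper hωper heqσ η hη hΩz hΩr
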